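/- Let G(x) = exp(−π x²) be the standard Gaussian and q > 2. Then the quantity ℋ(G) = ∫_ℝ (𝓠 G)(ξ)·|Ĝ(ξ)|^{q−2} dξ is strictly positive, where (𝓠 G)(ξ) = Re ∫_{(x₁∧x₂)>(x₃∨x₄)} G(x₁)G(x₂)G(x₃)G(x₄)·e^{2πi(−x₁−x₂+x₃+x₄)ξ} dx⃗. -/

import Mathlib

open MeasureTheory

/-- The quartic operator `𝓠`. -/
noncomputable def Qop (f : ℝ → ℂ) (ξ : ℝ) : ℝ :=
  (∫ x in {x : ℝ × ℝ × ℝ × ℝ | max x.2.2.1 x.2.2.2 < min x.1 x.2.1},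
    f x.1 * f x.2.1 * (starRingEnd ℂ) (f x.2.2.1 * f x.2.2.2) *
      Complex.exp (2 * Real.pi * Complex.I * (-x.1 - x.2.1 + x.2.2.1 + x.2.2.2) * ξ)).re

/-- The Fourier transform `f̂(ξ) = ∫ f(x) e^{−2πi xξ} dx`. -/
noncomputable def fourierInt (f : ℝ → ℂ) (ξ : ℝ) : ℂ :=
  ∫ x : ℝ, f x * Complex.exp (-(2 * Real.pi * Complex.I * x * ξ))

/-!
For real `g`, `𝓠 g (ξ)` is the integral of the weight `g(x₁)g(x₂)g(x₃)g(x₄)` against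
`cos (2π(-x₁-x₂+x₃+x₄)ξ)`, and `|Ĝ|^{q-2}(ξ) = exp(-π(q-2)ξ²)`. After Fubini, `ℋ(G)` becomes the
integral of the (positive) Gaussian weight times the cosine transform of a Gaussian, which is again
a positive Gaussian; so `ℋ(G)` is the integral of a positive function over a nonempty open set.
-/

open Complex Real FourierTransform

theorem integral_cos_mul_mul_exp_neg_mul_sq {a : ℝ} (ha : 0 < a) (c : ℝ) :
    ∫ ξ : ℝ, Real.cos (c * ξ) * rexp (-a * ξ ^ 2) = √(π / a) * rexp (-c ^ 2 / (4 * a)) := by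
  have ha' : 0 < (a : ℂ).re := by simpa using ha
  have hint : Integrable fun ξ : ℝ => cexp (I * c * ξ) * cexp (-a * ξ ^ 2) := by
    refine (integrable_cexp_quadratic ha' (I * c) 0).congr (ae_of_all _ fun ξ => ?_)
    simp only [← Complex.exp_add]
    ring_nf
  have hsqrt : ((π : ℂ) / a) ^ (1 / 2 : ℂ) = (√(π / a) : ℝ) := by
    rw [Real.sqrt_eq_rpow, ← ofReal_div, ofReal_cpow (by positivity)]
    norm_num
  calc ∫ ξ : ℝ, Real.cos (c * ξ) * rexp (-a * ξ ^ 2)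
      = ∫ ξ : ℝ, RCLike.re (cexp (I * c * ξ) * cexp (-a * ξ ^ 2)) := by
        congr 1 with ξ
        rw [RCLike.re_to_complex, show I * c * ξ = ((c * ξ : ℝ) : ℂ) * I by push_cast; ring,
          show -(a : ℂ) * ξ ^ 2 = ((-a * ξ ^ 2 : ℝ) : ℂ) by push_cast; ring, ← ofReal_exp,
          re_mul_ofReal, exp_ofReal_mul_I_re]
    _ = (√(π / a) * cexp (-c ^ 2 / (4 * a))).re := by
        rw [integral_re hint, RCLike.re_to_complex, fourierIntegral_gaussian ha', hsqrt]
    _ = √(π / a) * rexp (-c ^ 2 / (4 * a)) := by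
        rw [show -(c : ℂ) ^ 2 / (4 * a) = ((-c ^ 2 / (4 * a) : ℝ) : ℂ) by push_cast; ring,
          ← ofReal_exp, ← ofReal_mul, ofReal_re]

theorem integral_integral_cos_mul_exp_neg_mul_sq_pos {α : Type*} [MeasurableSpace α]
    {μ : Measure α} [SFinite μ] [NeZero μ] {w c : α → ℝ} (hw : ∀ x, 0 < w x)
    (hwi : Integrable w μ) (hc : Measurable c) {a : ℝ} (ha : 0 < a) :
    0 < ∫ ξ : ℝ, (∫ x, w x * Real.cos (c x * ξ) ∂μ) * rexp (-a * ξ ^ 2) := by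
  have hF : Integrable (Function.uncurry fun (ξ : ℝ) (x : α) =>
      w x * Real.cos (c x * ξ) * rexp (-a * ξ ^ 2)) (volume.prod μ) := by
    refine ((integrable_exp_neg_mul_sq ha).mul_prod hwi).mono' ?_ (ae_of_all _ fun z => ?_)
    · exact (hwi.1.comp_snd.mul (by fun_prop)).mul (by fun_prop)
    · simp only [Function.uncurry, norm_mul, Real.norm_eq_abs, abs_of_pos (hw _),
        abs_of_pos (Real.exp_pos _)]
      calc w z.2 * |Real.cos (c z.2 * z.1)| * rexp (-a * z.1 ^ 2)
          ≤ w z.2 * 1 * rexp (-a * z.1 ^ 2) := by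
            gcongr
            · exact (hw _).le
            · exact Real.abs_cos_le_one _
        _ = rexp (-a * z.1 ^ 2) * w z.2 := by ring
  have hinner (x : α) : ∫ ξ : ℝ, w x * Real.cos (c x * ξ) * rexp (-a * ξ ^ 2)
      = w x * (√(π / a) * rexp (-c x ^ 2 / (4 * a))) := by
    rw [← integral_cos_mul_mul_exp_neg_mul_sq ha, ← integral_const_mul]
    simp only [mul_assoc]
  have hsqrt : 0 < √(π / a) := Real.sqrt_pos.mpr (by positivity)
  have hpos (x : α) : 0 < w x * (√(π / a) * rexp (-c x ^ 2 / (4 * a))) := by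
    have := hw x
    positivity
  have hbound (x : α) : ‖√(π / a) * rexp (-c x ^ 2 / (4 * a))‖ ≤ √(π / a) := by
    rw [Real.norm_eq_abs, abs_of_pos (by positivity)]
    refine mul_le_of_le_one_right hsqrt.le (Real.exp_le_one_iff.mpr ?_)
    exact div_nonpos_of_nonpos_of_nonneg (neg_nonpos.mpr (sq_nonneg _)) (by positivity)
  simp_rw [← integral_mul_const]
  rw [integral_integral_swap hF]
  simp_rw [hinner]
  refine (integral_pos_iff_support_of_nonneg (fun x => (hpos x).le) ?_).mpr ?_
  · exact hwi.mul_bdd (by fun_prop) (ae_of_all _ hbound)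
  · simp [Function.support, (hpos _).ne', NeZero.ne μ]

theorem fourierInt_eq_fourier (f : ℝ → ℂ) : fourierInt f = 𝓕 f := by
  ext ξ
  rw [fourierInt, fourier_real_eq_integral_exp_smul]
  congr 1 with x
  rw [smul_eq_mul, mul_comm]
  congr 2
  push_cast
  ring

theorem fourierInt_gaussian (ξ : ℝ) :
    fourierInt (fun x => cexp (-π * x ^ 2)) ξ = cexp (-π * ξ ^ 2) := by
  simpa [fourierInt_eq_fourier] using congrFun (fourier_gaussian_pi (b := 1) (by simp)) ξ

def quarticRegion : Set (ℝ × ℝ × ℝ × ℝ) := {x | max x.2.2.1 x.2.2.2 < min x.1 x.2.1}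

instance : NeZero (volume.restrict quarticRegion) := by
  refine ⟨fun h => ?_⟩
  rw [Measure.restrict_eq_zero] at h
  refine (IsOpen.measure_pos volume ?_ ⟨(1, 1, 0, 0), ?_⟩).ne' h
  · exact isOpen_lt (by fun_prop) (by fun_prop)
  · norm_num [quarticRegion]

theorem Qop_ofReal {g : ℝ → ℝ} (hg : Integrable g) (ξ : ℝ) :
    Qop (fun x => (g x : ℂ)) ξ =
      ∫ x in quarticRegion, g x.1 * (g x.2.1 * (g x.2.2.1 * g x.2.2.2)) *
          Real.cos (2 * π * (-x.1 - x.2.1 + x.2.2.1 + x.2.2.2) * ξ) := by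
  have hw : Integrable (fun x : ℝ × ℝ × ℝ × ℝ => g x.1 * (g x.2.1 * (g x.2.2.1 * g x.2.2.2))) :=
    hg.mul_prod (hg.mul_prod (hg.mul_prod hg))
  have hint : Integrable (fun x : ℝ × ℝ × ℝ × ℝ =>
      ((g x.1 * (g x.2.1 * (g x.2.2.1 * g x.2.2.2)) : ℝ) : ℂ) *
        cexp (((2 * π * (-x.1 - x.2.1 + x.2.2.1 + x.2.2.2) * ξ : ℝ) : ℂ) * I)) :=
    hw.ofReal.mul_bdd (by fun_prop) (ae_of_all _ fun x => by rw [norm_exp_ofReal_mul_I])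
  have hpt (x : ℝ × ℝ × ℝ × ℝ) :
      (g x.1 : ℂ) * g x.2.1 * (starRingEnd ℂ) (g x.2.2.1 * g x.2.2.2) *
        cexp (2 * π * I * (-x.1 - x.2.1 + x.2.2.1 + x.2.2.2) * ξ) =
      ((g x.1 * (g x.2.1 * (g x.2.2.1 * g x.2.2.2)) : ℝ) : ℂ) *
        cexp (((2 * π * (-x.1 - x.2.1 + x.2.2.1 + x.2.2.2) * ξ : ℝ) : ℂ) * I) := by
    simp only [map_mul, conj_ofReal]
    push_cast
    ring_nf
  simp_rw [Qop, hpt, ← RCLike.re_to_complex, ← integral_re hint.integrableOn,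
    RCLike.re_to_complex, re_ofReal_mul, exp_ofReal_mul_I_re]
  rfl

theorem stmt_17 (q : ℝ) (hq : 2 < q)
    (G : ℝ → ℂ) (hG : ∀ x : ℝ, G x = Complex.exp (-(Real.pi : ℂ) * x ^ 2)) :
    0 < ∫ ξ : ℝ, Qop G ξ * ‖fourierInt G ξ‖ ^ (q - 2) := by
  set g : ℝ → ℝ := fun x => rexp (-π * x ^ 2)
  have hg : Integrable g := integrable_exp_neg_mul_sq pi_pos
  have hGg : G = fun x => (g x : ℂ) := by
    ext x
    rw [hG, ofReal_exp]
    push_cast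
    ring_nf
  have hnorm (ξ : ℝ) : ‖fourierInt G ξ‖ ^ (q - 2) = rexp (-(π * (q - 2)) * ξ ^ 2) := by
    rw [funext hG, fourierInt_gaussian,
      show -(π : ℂ) * ξ ^ 2 = ((-π * ξ ^ 2 : ℝ) : ℂ) by push_cast; ring,
      norm_exp_ofReal, ← Real.exp_mul]
    ring_nf
  have hexponent : 0 < π * (q - 2) := mul_pos pi_pos (by linarith)
  simp_rw [hnorm, hGg, Qop_ofReal hg]
  exact integral_integral_cos_mul_exp_neg_mul_sq_pos (μ := volume.restrict quarticRegion)
    (fun x => by positivity) (hg.mul_prod (hg.mul_prod (hg.mul_prod hg))).integrableOn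
    (by fun_prop) hexponent
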